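/- Let S be a Hermiticity-preserving linear map from d×d complex matrices to m×m complex matrices. Then ‖S‖_ME = ‖S‖_⋄ if and only if M(S) = ‖S‖_ME · 1_d, i.e. the M-operator of S equals ‖S‖_ME times the d×d identity matrix. -/

import Mathlib

open Matrix Kronecker ComplexOrder

noncomputable section

/-- The old Mathlib `Matrix.PosSemidef.sqrt` (removed), spelled out with its old definition. -/
noncomputable def oldPSDSqrt {n : Type*} [Fintype n] [DecidableEq n] {A : Matrix n n ℂ}
    (hA : A.PosSemidef) : Matrix n n ℂ :=
  (hA.1.eigenvectorUnitary : Matrix n n ℂ) * diagonal ((↑) ∘ Real.sqrt ∘ hA.1.eigenvalues) *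
    (star (hA.1.eigenvectorUnitary : Matrix n n ℂ))

/-- The matrix absolute value `|A| = √(AᴴA)`. -/
noncomputable def matAbs {n : Type*} [Fintype n] [DecidableEq n] (A : Matrix n n ℂ) :
    Matrix n n ℂ :=
  oldPSDSqrt (Matrix.posSemidef_conjTranspose_mul_self A)

/-- The trace norm `‖A‖₁ = Tr √(AᴴA)`. -/
noncomputable def traceNorm {n : Type*} [Fintype n] [DecidableEq n] (A : Matrix n n ℂ) : ℝ :=
  ((matAbs A).trace).re

/-- The positive semidefinite square root of a PSD matrix (zero otherwise). -/
noncomputable def matSqrt {n : Type*} [Fintype n] [DecidableEq n] (σ : Matrix n n ℂ) :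
    Matrix n n ℂ :=
  open scoped Classical in
  if h : σ.PosSemidef then oldPSDSqrt h else 0

/-- A density matrix: positive semidefinite with unit trace. -/
def IsDensity {n : Type*} [Fintype n] [DecidableEq n] (σ : Matrix n n ℂ) : Prop :=
  σ.PosSemidef ∧ σ.trace = 1

/-- The Choi operator of a linear map between matrix algebras. -/
noncomputable def choi {d m : ℕ}
    (S : Matrix (Fin d) (Fin d) ℂ →ₗ[ℂ] Matrix (Fin m) (Fin m) ℂ) :
    Matrix (Fin m × Fin d) (Fin m × Fin d) ℂ :=
  ∑ i : Fin d, ∑ j : Fin d,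
    (S (Matrix.single i j 1)) ⊗ₖ (Matrix.single i j 1)

/-- The ME-norm `‖S‖_ME = ‖J(S)‖₁ / d`. -/
noncomputable def MENorm {d m : ℕ}
    (S : Matrix (Fin d) (Fin d) ℂ →ₗ[ℂ] Matrix (Fin m) (Fin m) ℂ) : ℝ :=
  traceNorm (choi S) / d

/-- The diamond norm: supremum over density matrices σ of
`‖(1 ⊗ √σ) J(S) (1 ⊗ √σ)‖₁`. -/
noncomputable def diamondNorm {d m : ℕ}
    (S : Matrix (Fin d) (Fin d) ℂ →ₗ[ℂ] Matrix (Fin m) (Fin m) ℂ) : ℝ :=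
  ⨆ σ : {σ : Matrix (Fin d) (Fin d) ℂ // IsDensity σ},
    traceNorm (((1 : Matrix (Fin m) (Fin m) ℂ) ⊗ₖ matSqrt σ.1) * choi S *
      ((1 : Matrix (Fin m) (Fin m) ℂ) ⊗ₖ matSqrt σ.1))

/-- The M-operator `M(S) = Tr_B |J(S)|`. -/
noncomputable def Mop {d m : ℕ}
    (S : Matrix (Fin d) (Fin d) ℂ →ₗ[ℂ] Matrix (Fin m) (Fin m) ℂ) :
    Matrix (Fin d) (Fin d) ℂ :=
  Matrix.of fun k l => ∑ b : Fin m, matAbs (choi S) (b, k) (b, l)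

/-- A quantum channel: completely positive (PSD Choi operator, by Choi's theorem)
and trace preserving. -/
def IsQChannel {d m : ℕ}
    (S : Matrix (Fin d) (Fin d) ℂ →ₗ[ℂ] Matrix (Fin m) (Fin m) ℂ) : Prop :=
  (choi S).PosSemidef ∧ ∀ ρ : Matrix (Fin d) (Fin d) ℂ, (S ρ).trace = ρ.trace

/-!
Write `J = J(S)`, `T = ‖J‖₁` and `M = M(S)`, so that `Tr M = T` and `‖S‖_ME = T / d`.
For a density matrix `σ`, splitting `J` into positive and negative parts gives
`‖(1 ⊗ √σ) J (1 ⊗ √σ)‖₁ ≤ Tr[(1 ⊗ σ) |J|] = Tr[σ M]`, while `σ = 1/d` attains `T / d`.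
Hence `M = (T/d) · 1` forces `‖S‖_⋄ = T / d`.

Conversely, if `M ≠ (T/d) · 1` then `M` has an eigenvalue `μ > T / d`, with eigenprojection `P`.
Take `√σ ∝ 1 + tP` and test the trace norm against the sign matrix `W` of `J`
(so `WJ = JW = |J|`): with `K = 1 ⊗ P` this gives `‖(1 + tK) J (1 + tK)‖₁ ≥ T + (2t - t²) μ`,
which after normalising `σ` exceeds `T / d` for small `t > 0`.
-/

open scoped MatrixOrder

section TraceNorm

variable {n : Type*} [Fintype n] [DecidableEq n]

lemma oldPSDSqrt_eq_sqrt {A : Matrix n n ℂ} (hA : A.PosSemidef) :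
    oldPSDSqrt hA = CFC.sqrt A := by
  rw [CFC.sqrt_eq_real_sqrt A hA.nonneg, cfcₙ_eq_cfc, hA.1.cfc_eq]
  rfl

lemma matAbs_eq_abs (A : Matrix n n ℂ) : matAbs A = CFC.abs A := by
  rw [matAbs, oldPSDSqrt_eq_sqrt]
  rfl

lemma posSemidef_matAbs (A : Matrix n n ℂ) : (matAbs A).PosSemidef := by
  rw [matAbs_eq_abs]
  exact (CFC.abs_nonneg A).posSemidef

lemma traceNorm_smul (c : ℂ) (A : Matrix n n ℂ) :
    traceNorm (c • A) = ‖c‖ * traceNorm A := by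
  rw [traceNorm, traceNorm, matAbs_eq_abs, matAbs_eq_abs, CFC.abs_smul, trace_smul]
  simp

lemma traceNorm_nonneg (A : Matrix n n ℂ) : 0 ≤ traceNorm A :=
  (Complex.le_def.mp (posSemidef_matAbs A).trace_nonneg).1

lemma matSqrt_eq_of_mul_self {σ B : Matrix n n ℂ} (hB : B.PosSemidef) (h : B * B = σ) :
    matSqrt σ = B := by
  have hσ : σ.PosSemidef := by
    simpa [← h, hB.1.eq] using posSemidef_self_mul_conjTranspose B
  rw [matSqrt, dif_pos hσ, oldPSDSqrt_eq_sqrt]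
  exact CFC.sqrt_unique h hB.nonneg

lemma Matrix.PosSemidef.matSqrt_mul_self {σ : Matrix n n ℂ} (hσ : σ.PosSemidef) :
    matSqrt σ * matSqrt σ = σ := by
  rw [matSqrt, dif_pos hσ, oldPSDSqrt_eq_sqrt]
  exact CFC.sqrt_mul_sqrt_self σ hσ.nonneg

lemma Matrix.PosSemidef.isHermitian_matSqrt {σ : Matrix n n ℂ} (hσ : σ.PosSemidef) :
    (matSqrt σ).IsHermitian := by
  rw [matSqrt, dif_pos hσ, oldPSDSqrt_eq_sqrt]
  exact (CFC.sqrt_nonneg σ).posSemidef.1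

lemma Matrix.PosSemidef.trace_mul_nonneg {E Q : Matrix n n ℂ} (hE : E.PosSemidef)
    (hQ : Q.PosSemidef) : 0 ≤ (E * Q).trace := by
  obtain ⟨B, rfl⟩ := CStarAlgebra.nonneg_iff_eq_star_mul_self.mp hQ.nonneg
  rw [← Matrix.mul_assoc, trace_mul_comm, ← Matrix.mul_assoc, star_eq_conjTranspose]
  exact (hE.mul_mul_conjTranspose_same B).trace_nonneg

lemma re_trace_mul_le_re_trace {C Q : Matrix n n ℂ} (hC : (1 - C).PosSemidef)
    (hQ : Q.PosSemidef) : (C * Q).trace.re ≤ Q.trace.re := by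
  have h := hC.trace_mul_nonneg hQ
  rw [Matrix.sub_mul, Matrix.one_mul, trace_sub, sub_nonneg] at h
  exact (Complex.le_def.mp h).1

lemma re_trace_mul_sub_le {C P N : Matrix n n ℂ} (h₁ : (1 - C).PosSemidef)
    (h₂ : (1 + C).PosSemidef) (hP : P.PosSemidef) (hN : N.PosSemidef) :
    (C * (P - N)).trace.re ≤ P.trace.re + N.trace.re := by
  have hCP := re_trace_mul_le_re_trace h₁ hP
  have hCN := re_trace_mul_le_re_trace (C := -C) (by rwa [sub_neg_eq_add]) hN
  rw [Matrix.neg_mul, trace_neg, Complex.neg_re] at hCN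
  rw [Matrix.mul_sub, trace_sub, Complex.sub_re]
  linarith

lemma re_trace_mul_le_traceNorm {C X : Matrix n n ℂ} (hX : X.IsHermitian)
    (h₁ : (1 - C).PosSemidef) (h₂ : (1 + C).PosSemidef) : (C * X).trace.re ≤ traceNorm X := by
  have hX' := hX.isSelfAdjoint
  calc (C * X).trace.re = (C * (X⁺ - X⁻)).trace.re := by rw [CFC.posPart_sub_negPart X]
    _ ≤ X⁺.trace.re + X⁻.trace.re :=
      re_trace_mul_sub_le h₁ h₂ (CFC.posPart_nonneg X).posSemidef
        (CFC.negPart_nonneg X).posSemidef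
    _ = traceNorm X := by
      rw [traceNorm, matAbs_eq_abs, ← CFC.posPart_add_negPart X, trace_add, Complex.add_re]

lemma Matrix.IsHermitian.exists_sign {X : Matrix n n ℂ} (hX : X.IsHermitian) :
    ∃ W : Matrix n n ℂ, (1 - W).PosSemidef ∧ (1 + W).PosSemidef ∧
      W * X = matAbs X ∧ X * W = matAbs X := by
  have hsign : ContinuousOn Real.sign (spectrum ℝ X) := X.finite_real_spectrum.continuousOn _
  have hX' : IsSelfAdjoint X := hX.isSelfAdjoint
  have hsign_mul : ∀ x : ℝ, Real.sign x * x = ‖x‖ := fun x => by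
    rcases lt_trichotomy x 0 with h | rfl | h
    · simp [Real.sign_of_neg h, abs_of_neg h]
    · simp
    · simp [Real.sign_of_pos h, abs_of_pos h]
  have hsign_bound : ∀ x : ℝ, 0 ≤ 1 - Real.sign x ∧ 0 ≤ 1 + Real.sign x := fun x => by
    rcases Real.sign_apply_eq x with h | h | h <;> norm_num [h]
  have habs : matAbs X = cfc (‖·‖) X := by rw [matAbs_eq_abs, CFC.abs_eq_cfc_norm X]
  refine ⟨cfc Real.sign X, ?_, ?_, ?_, ?_⟩
  · rw [← cfc_const_one ℝ X, ← cfc_sub _ _ X]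
    exact (cfc_nonneg fun x _ => (hsign_bound x).1).posSemidef
  · rw [← cfc_const_one ℝ X, ← cfc_add X _ _]
    exact (cfc_nonneg fun x _ => (hsign_bound x).2).posSemidef
  · conv_lhs => enter [2]; rw [← cfc_id' ℝ X]
    rw [← cfc_mul _ _ X, habs]
    exact cfc_congr fun x _ => hsign_mul x
  · conv_lhs => enter [1]; rw [← cfc_id' ℝ X]
    rw [← cfc_mul _ _ X, habs]
    exact cfc_congr fun x _ => by rw [mul_comm]; exact hsign_mul x

lemma traceNorm_mul_mul_conjTranspose_le {m : Type*} [Fintype m] [DecidableEq m]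
    {X : Matrix n n ℂ} (hX : X.IsHermitian) (A : Matrix m n ℂ) :
    traceNorm (A * X * Aᴴ) ≤ (A * matAbs X * Aᴴ).trace.re := by
  have hX' := hX.isSelfAdjoint
  obtain ⟨W, h₁, h₂, hW, -⟩ := (isHermitian_mul_mul_conjTranspose A hX).exists_sign
  calc traceNorm (A * X * Aᴴ) = (W * (A * X⁺ * Aᴴ - A * X⁻ * Aᴴ)).trace.re := by
        rw [← Matrix.sub_mul, ← Matrix.mul_sub, CFC.posPart_sub_negPart X, hW, traceNorm]
    _ ≤ (A * X⁺ * Aᴴ).trace.re + (A * X⁻ * Aᴴ).trace.re :=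
      re_trace_mul_sub_le h₁ h₂ ((CFC.posPart_nonneg X).posSemidef.mul_mul_conjTranspose_same A)
        ((CFC.negPart_nonneg X).posSemidef.mul_mul_conjTranspose_same A)
    _ = (A * matAbs X * Aᴴ).trace.re := by
      rw [matAbs_eq_abs, ← CFC.posPart_add_negPart X, Matrix.mul_add, Matrix.add_mul, trace_add,
        Complex.add_re]

lemma IsDensity.posSemidef_one_sub {σ : Matrix n n ℂ} (hσ : IsDensity σ) :
    (1 - σ).PosSemidef := by
  have hσh := hσ.1.1
  have hsum : ∑ i, hσh.eigenvalues i = 1 := by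
    have h := hσh.trace_eq_sum_eigenvalues
    rw [hσ.2] at h
    simpa using congrArg Complex.re h.symm
  have hle : ∀ x ∈ spectrum ℝ σ, x ≤ 1 := by
    rw [hσh.spectrum_real_eq_range_eigenvalues]
    rintro _ ⟨i, rfl⟩
    rw [← hsum]
    exact Finset.single_le_sum (fun j _ => hσ.1.eigenvalues_nonneg j) (Finset.mem_univ i)
  have h := le_algebraMap_of_spectrum_le hle hσh.isSelfAdjoint
  rwa [map_one] at h

end TraceNorm

section PartialTrace

variable {R : Type*} {m n : Type*} [Fintype m]

def Matrix.traceLeft [AddCommMonoid R] (X : Matrix (m × n) (m × n) R) : Matrix n n R :=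
  of fun k l => ∑ b, X (b, k) (b, l)

lemma Matrix.trace_traceLeft [AddCommMonoid R] [Fintype n] (X : Matrix (m × n) (m × n) R) :
    X.traceLeft.trace = X.trace := by
  simp only [trace, diag, traceLeft, of_apply, Fintype.sum_prod_type]
  exact Finset.sum_comm

lemma Matrix.trace_one_kronecker_mul [Semiring R] [Fintype n] [DecidableEq m] (Q : Matrix n n R)
    (X : Matrix (m × n) (m × n) R) :
    ((1 : Matrix m m R) ⊗ₖ Q * X).trace = (Q * X.traceLeft).trace := by
  simp only [trace, diag, mul_apply, traceLeft, of_apply, kroneckerMap_apply, one_apply,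
    Fintype.sum_prod_type, ite_mul, one_mul, zero_mul, Finset.mul_sum]
  rw [Finset.sum_comm]
  refine Finset.sum_congr rfl fun k _ => ?_
  calc _ = ∑ b : m, ∑ l, Q k l * X (b, l) (b, k) :=
        Finset.sum_congr rfl fun b _ => by rw [Finset.sum_comm]; simp
    _ = _ := Finset.sum_comm

lemma Matrix.IsHermitian.traceLeft [AddCommMonoid R] [StarAddMonoid R]
    {X : Matrix (m × n) (m × n) R} (hX : X.IsHermitian) : X.traceLeft.IsHermitian := by
  ext k l
  rw [conjTranspose_apply, Matrix.traceLeft, of_apply, of_apply, star_sum]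
  exact Finset.sum_congr rfl fun b _ => hX.apply (b, k) (b, l)

end PartialTrace

section Spectral

variable {n : Type*} [Fintype n] [DecidableEq n]

lemma Matrix.IsHermitian.exists_eigenvalue_gt {A : Matrix n n ℂ} (hA : A.IsHermitian) {c : ℝ}
    (htr : A.trace.re = Fintype.card n * c) (hne : A ≠ (c : ℂ) • 1) :
    ∃ i, c < hA.eigenvalues i := by
  by_contra! hle
  have hsum : ∑ i, hA.eigenvalues i = ∑ _i : n, c := by
    rw [Finset.sum_const, Finset.card_univ, nsmul_eq_mul, ← htr, hA.trace_eq_sum_eigenvalues]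
    simp
  have heq : hA.eigenvalues = fun _ => c := funext fun i =>
    (Finset.sum_eq_sum_iff_of_le fun i _ => hle i).mp hsum i (Finset.mem_univ i)
  apply hne
  have hdiag :
      diagonal (RCLike.ofReal ∘ hA.eigenvalues) = (c : ℂ) • (1 : Matrix n n ℂ) := by
    rw [heq, smul_one_eq_diagonal]
    rfl
  conv_lhs => rw [hA.spectral_theorem, hdiag]
  simp

lemma Matrix.IsHermitian.exists_projection_re_trace_mul_eq {A : Matrix n n ℂ}
    (hA : A.IsHermitian) (i : n) :
    ∃ P : Matrix n n ℂ, P.PosSemidef ∧ P * P = P ∧ P.trace = 1 ∧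
      (P * A).trace.re = hA.eigenvalues i := by
  set v : n → ℂ := ⇑(hA.eigenvectorBasis i)
  have hv : star v ⬝ᵥ v = 1 := by
    rw [dotProduct_comm, ← EuclideanSpace.inner_eq_star_dotProduct,
      inner_self_eq_norm_sq_to_K, hA.eigenvectorBasis.orthonormal.1 i]
    simp
  refine ⟨vecMulVec v (star v), posSemidef_vecMulVec_self_star v, ?_, ?_, ?_⟩
  · rw [vecMulVec_mul_vecMulVec, hv, one_smul]
  · rw [trace_vecMulVec, dotProduct_comm, hv]
  · rw [vecMulVec_mul, trace_vecMulVec, dotProduct_comm, ← dotProduct_mulVec,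
      hA.eigenvalues_eq i]
    rfl

end Spectral

section Conjugation

variable {n : Type*} [Fintype n] [DecidableEq n]

lemma add_le_traceNorm_conj_one_add_smul {J K : Matrix n n ℂ} (hJ : J.IsHermitian)
    (hK : K.IsHermitian) (hKK : K * K = K) (t : ℝ) :
    traceNorm J + (2 * t - t ^ 2) * (K * matAbs J).trace.re ≤
      traceNorm ((1 + (t : ℂ) • K) * J * (1 + (t : ℂ) • K)) := by
  -- Pair with the sign matrix `W` of `J`: the linear terms become `Tr[K |J|]`, and the quadratic
  -- term is at least `-‖KJK‖₁ ≥ -Tr[K |J| K] = -Tr[K |J|]`.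
  obtain ⟨W, h₁, h₂, hWJ, hJW⟩ := hJ.exists_sign
  have hWKJ : (W * (K * J)).trace = (K * matAbs J).trace := by
    rw [← Matrix.mul_assoc, trace_mul_cycle, trace_mul_cycle, Matrix.mul_assoc, hJW]
  have hWJK : (W * (J * K)).trace = (K * matAbs J).trace := by
    rw [← Matrix.mul_assoc, hWJ, trace_mul_comm]
  have hWKJK : -(K * matAbs J).trace.re ≤ (W * (K * J * K)).trace.re := by
    have hKJK : traceNorm (K * J * K) ≤ (K * matAbs J).trace.re := by
      have h := traceNorm_mul_mul_conjTranspose_le hJ K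
      rwa [hK.eq, trace_mul_cycle, hKK] at h
    have h := re_trace_mul_le_traceNorm (C := -W) (isHermitian_mul_mul_conjTranspose K hJ)
      (by rwa [sub_neg_eq_add]) (by rwa [← sub_eq_add_neg])
    rw [hK.eq, Matrix.neg_mul, trace_neg, Complex.neg_re] at h
    linarith
  have hexpand : (W * ((1 + (t : ℂ) • K) * J * (1 + (t : ℂ) • K))).trace.re =
      (W * J).trace.re + t * (W * (K * J)).trace.re + t * (W * (J * K)).trace.re +
        t ^ 2 * (W * (K * J * K)).trace.re := by
    simp only [Matrix.add_mul, Matrix.mul_add, Matrix.one_mul, Matrix.mul_one, Matrix.smul_mul,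
      Matrix.mul_smul, trace_add, trace_smul, smul_eq_mul, Complex.add_re, Complex.re_ofReal_mul,
      Matrix.mul_assoc]
    ring
  have hdual := re_trace_mul_le_traceNorm
    (isHermitian_mul_mul_conjTranspose (1 + (t : ℂ) • K) hJ) h₁ h₂
  have hconj : (1 + (t : ℂ) • K)ᴴ = 1 + (t : ℂ) • K := by
    rw [conjTranspose_add, conjTranspose_one, conjTranspose_smul, hK.eq, Complex.star_def,
      Complex.conj_ofReal]
  rw [hconj, hexpand, hWKJ, hWJK, hWJ] at hdual
  have hT : (matAbs J).trace.re = traceNorm J := rfl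
  nlinarith [sq_nonneg t]

end Conjugation

lemma exists_lt_div_add_sq {d T μ : ℝ} (hd : 0 < d) (hT : 0 ≤ T) (hμ : T / d < μ) :
    ∃ t : ℝ, 0 ≤ t ∧ T / d < (T + (2 * t - t ^ 2) * μ) / (d + 2 * t + t ^ 2) := by
  have hu : 0 < d * μ - T := by rw [div_lt_iff₀ hd] at hμ; linarith
  have hv : 0 < d * μ + T := by linarith
  set t := (d * μ - T) / (d * μ + T)
  have ht : 0 < t := div_pos hu hv
  have htv : t * (d * μ + T) = d * μ - T := div_mul_cancel₀ _ hv.ne'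
  refine ⟨t, ht.le, ?_⟩
  rw [div_lt_div_iff₀ hd (by positivity)]
  nlinarith [mul_pos ht hu]

section Choi

variable {d m : ℕ} {S : Matrix (Fin d) (Fin d) ℂ →ₗ[ℂ] Matrix (Fin m) (Fin m) ℂ}

def choiSandwich (S : Matrix (Fin d) (Fin d) ℂ →ₗ[ℂ] Matrix (Fin m) (Fin m) ℂ)
    (A : Matrix (Fin d) (Fin d) ℂ) : Matrix (Fin m × Fin d) (Fin m × Fin d) ℂ :=
  (1 : Matrix (Fin m) (Fin m) ℂ) ⊗ₖ A * choi S * ((1 : Matrix (Fin m) (Fin m) ℂ) ⊗ₖ A)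

lemma diamondNorm_eq_iSup :
    diamondNorm S = ⨆ σ : {σ : Matrix (Fin d) (Fin d) ℂ // IsDensity σ},
      traceNorm (choiSandwich S (matSqrt σ.1)) :=
  rfl

lemma Mop_eq_traceLeft : Mop S = (matAbs (choi S)).traceLeft :=
  rfl

lemma traceNorm_choiSandwich_matSqrt_le (hS : (choi S).IsHermitian)
    {σ : Matrix (Fin d) (Fin d) ℂ} (hσ : σ.PosSemidef) :
    traceNorm (choiSandwich S (matSqrt σ)) ≤ (σ * Mop S).trace.re := by
  set A := (1 : Matrix (Fin m) (Fin m) ℂ) ⊗ₖ matSqrt σ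
  have hA : Aᴴ = A := by
    rw [conjTranspose_kronecker, conjTranspose_one, hσ.isHermitian_matSqrt.eq]
  have hAA : A * A = (1 : Matrix (Fin m) (Fin m) ℂ) ⊗ₖ σ := by
    rw [← mul_kronecker_mul, Matrix.one_mul, hσ.matSqrt_mul_self]
  have h := traceNorm_mul_mul_conjTranspose_le hS A
  rwa [hA, trace_mul_cycle, hAA, trace_one_kronecker_mul, ← Mop_eq_traceLeft] at h

lemma IsDensity.re_trace_mul_Mop_le {σ : Matrix (Fin d) (Fin d) ℂ} (hσ : IsDensity σ) :
    (σ * Mop S).trace.re ≤ traceNorm (choi S) := by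
  have hsplit : (1 : Matrix (Fin m) (Fin m) ℂ) ⊗ₖ σ + 1 ⊗ₖ (1 - σ) = 1 := by
    rw [← kronecker_add, add_sub_cancel, one_kronecker_one]
  rw [Mop_eq_traceLeft, ← trace_one_kronecker_mul]
  refine re_trace_mul_le_re_trace ?_ (posSemidef_matAbs _)
  rw [← hsplit, add_sub_cancel_left]
  exact PosSemidef.one.kronecker hσ.posSemidef_one_sub

lemma bddAbove_range_traceNorm_choiSandwich (hS : (choi S).IsHermitian) :
    BddAbove (Set.range fun σ : {σ : Matrix (Fin d) (Fin d) ℂ // IsDensity σ} =>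
      traceNorm (choiSandwich S (matSqrt σ.1))) := by
  refine ⟨traceNorm (choi S), ?_⟩
  rintro _ ⟨σ, rfl⟩
  exact (traceNorm_choiSandwich_matSqrt_le hS σ.2.1).trans σ.2.re_trace_mul_Mop_le

lemma traceNorm_choiSandwich_div_le_diamondNorm (hS : (choi S).IsHermitian)
    {A : Matrix (Fin d) (Fin d) ℂ} (hA : A.PosSemidef) (hpos : 0 < (A * A).trace.re) :
    traceNorm (choiSandwich S A) / (A * A).trace.re ≤ diamondNorm S := by
  set s := (A * A).trace.re
  set r := (Real.sqrt s)⁻¹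
  have hr : r * r = s⁻¹ := by rw [← mul_inv, Real.mul_self_sqrt hpos.le]
  have hAA : (A * A).trace = s := by
    have h : (A * A).PosSemidef := by
      simpa only [hA.1.eq] using posSemidef_self_mul_conjTranspose A
    exact Complex.eq_re_of_ofReal_le (r := 0) (by simpa using h.trace_nonneg)
  set B := (r : ℂ) • A
  have hB : B.PosSemidef := hA.smul (by positivity)
  have hσ : IsDensity (B * B) := by
    refine ⟨by simpa only [hB.1.eq] using posSemidef_self_mul_conjTranspose B, ?_⟩
    rw [Matrix.smul_mul, Matrix.mul_smul, smul_smul, trace_smul, hAA, smul_eq_mul,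
      ← Complex.ofReal_mul, ← Complex.ofReal_mul, hr, inv_mul_cancel₀ hpos.ne',
      Complex.ofReal_one]
  have hBA : choiSandwich S B = ((r * r : ℝ) : ℂ) • choiSandwich S A := by
    rw [choiSandwich, choiSandwich, kronecker_smul, Matrix.smul_mul, Matrix.smul_mul,
      Matrix.mul_smul, smul_smul, Complex.ofReal_mul]
  calc _ = traceNorm (choiSandwich S (matSqrt (B * B))) := by
        rw [matSqrt_eq_of_mul_self hB rfl, hBA, traceNorm_smul, Complex.norm_real,
          Real.norm_of_nonneg (by positivity), hr, div_eq_inv_mul]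
    _ ≤ diamondNorm S := le_ciSup (bddAbove_range_traceNorm_choiSandwich hS) ⟨B * B, hσ⟩

lemma MENorm_le_diamondNorm (hd : 1 ≤ d) (hS : (choi S).IsHermitian) :
    MENorm S ≤ diamondNorm S := by
  have h := traceNorm_choiSandwich_div_le_diamondNorm hS (PosSemidef.one (n := Fin d) (R := ℂ))
    (by simp only [mul_one, trace_one, Fintype.card_fin, Complex.natCast_re, Nat.cast_pos]; omega)
  simpa [choiSandwich, one_kronecker_one, MENorm] using h

lemma diamondNorm_le_of_Mop_eq_smul_one (hS : (choi S).IsHermitian) {c : ℝ} (hc : 0 ≤ c)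
    (hM : Mop S = (c : ℂ) • 1) : diamondNorm S ≤ c := by
  rw [diamondNorm_eq_iSup]
  refine Real.iSup_le (fun σ => (traceNorm_choiSandwich_matSqrt_le hS σ.2.1).trans ?_) hc
  rw [hM, Matrix.mul_smul, Matrix.mul_one, trace_smul, σ.2.2, smul_eq_mul, mul_one,
    Complex.ofReal_re]

lemma MENorm_lt_diamondNorm_of_Mop_ne (hd : 1 ≤ d) (hS : (choi S).IsHermitian)
    (hM : Mop S ≠ (MENorm S : ℂ) • 1) : MENorm S < diamondNorm S := by
  have hd₀ : (0 : ℝ) < d := by exact_mod_cast hd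
  have hMh : (Mop S).IsHermitian := (posSemidef_matAbs (choi S)).1.traceLeft
  have htr : (Mop S).trace.re = Fintype.card (Fin d) * MENorm S := by
    rw [Mop_eq_traceLeft, trace_traceLeft, Fintype.card_fin, MENorm, mul_div_cancel₀ _ hd₀.ne']
    rfl
  obtain ⟨i, hi⟩ := hMh.exists_eigenvalue_gt htr hM
  obtain ⟨P, hP, hPP, hPtr, hPM⟩ := hMh.exists_projection_re_trace_mul_eq i
  obtain ⟨t, ht, hlt⟩ := exists_lt_div_add_sq hd₀ (traceNorm_nonneg (choi S)) hi
  set K := (1 : Matrix (Fin m) (Fin m) ℂ) ⊗ₖ P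
  have hK : K.IsHermitian := by
    rw [IsHermitian, conjTranspose_kronecker, conjTranspose_one, hP.1.eq]
  have hKK : K * K = K := by rw [← mul_kronecker_mul, Matrix.one_mul, hPP]
  have hKM : (K * matAbs (choi S)).trace.re = hMh.eigenvalues i := by
    rw [trace_one_kronecker_mul, ← Mop_eq_traceLeft, hPM]
  set A := 1 + (t : ℂ) • P
  have hA : A.PosSemidef := PosSemidef.one.add (hP.smul (by exact_mod_cast ht))
  have hAA : (A * A).trace.re = d + 2 * t + t ^ 2 := by
    simp only [A, Matrix.add_mul, Matrix.mul_add, Matrix.one_mul, Matrix.smul_mul,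
      Matrix.mul_smul, hPP, trace_add, trace_smul, trace_one, hPtr, Fintype.card_fin, smul_eq_mul,
      mul_one, Complex.add_re, Complex.natCast_re, Complex.re_ofReal_mul, Complex.ofReal_re,
      Complex.one_re]
    ring
  have hkron : (1 : Matrix (Fin m) (Fin m) ℂ) ⊗ₖ A = 1 + (t : ℂ) • K := by
    rw [kronecker_add, kronecker_smul, one_kronecker_one]
  calc MENorm S < _ := hlt
    _ ≤ traceNorm (choiSandwich S A) / (A * A).trace.re := by
        rw [hAA, choiSandwich, hkron, ← hKM]
        gcongr
        exact add_le_traceNorm_conj_one_add_smul hS hK hKK t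
    _ ≤ diamondNorm S := traceNorm_choiSandwich_div_le_diamondNorm hS hA (by rw [hAA]; positivity)

end Choi

/-- `‖S‖_ME = ‖S‖_⋄` iff the M-operator `M(S)` equals `‖S‖_ME · 1_d`. -/
theorem stmt1 {d m : ℕ} (hd : 1 ≤ d)
    (S : Matrix (Fin d) (Fin d) ℂ →ₗ[ℂ] Matrix (Fin m) (Fin m) ℂ)
    (hS : (choi S).IsHermitian) :
    MENorm S = diamondNorm S ↔
      Mop S = (MENorm S : ℂ) • (1 : Matrix (Fin d) (Fin d) ℂ) := by
  refine ⟨fun h => ?_, fun hM => ?_⟩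
  · by_contra hM
    exact (MENorm_lt_diamondNorm_of_Mop_ne hd hS hM).ne h
  · have hME : 0 ≤ MENorm S := div_nonneg (traceNorm_nonneg _) (Nat.cast_nonneg d)
    exact le_antisymm (MENorm_le_diamondNorm hd hS) (diamondNorm_le_of_Mop_eq_smul_one hS hME hM)

end
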